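/- arXiv:1911.10881 — 6 statements merged into one kernel-verified Lean document; each statement's English description precedes it below -/
import Mathlib

section
/- Let v : ℝ → ℝ be twice differentiable and satisfy v''(t) + v(t) − v(t)³ = 0 for all t ∈ ℝ, with v(t) → 1 as t → +∞ and v(t) → −1 as t → −∞. Then there exists c ∈ ℝ such that v(t) = tanh((t − c)/√2) for all t ∈ ℝ; that is, the heteroclinic solution is unique up to translations. -/
/-!
Multiplying the equation by `v'` gives the first integral `v'² = L + (1 - v²)² / 2`, and `L = 0`
because `v'` cannot stay away from zero while `v` converges at `+∞`. Then `|v'| ≤ |1 - v²|`, so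
`v` solves an ODE `x' = a(t) (1 - x²)` with `|a| ≤ 1` of which `±1` are solutions; by uniqueness
`v` never reaches `±1`, hence `|v| < 1` and `v'` never vanishes. Darboux and the limits force
`v' > 0`, so `v' = (1 - v²) / √2`, whose solutions with values in `(-1, 1)` are the translates
of `tanh (· / √2)`.
-/

open Filter Set Topology Real

lemma Real.hasDerivAt_tanh (x : ℝ) : HasDerivAt tanh (1 - tanh x ^ 2) x := by
  have h := (hasDerivAt_sinh x).div (hasDerivAt_cosh x) (cosh_pos x).ne'
  rw [show tanh = fun x => sinh x / cosh x from funext tanh_eq_sinh_div_cosh]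
  refine h.congr_deriv ?_
  field_simp

lemma hasDerivAt_tanh_sub_div_sqrt_two (c t : ℝ) :
    HasDerivAt (fun t => tanh ((t - c) / √2)) ((√2)⁻¹ * (1 - tanh ((t - c) / √2) ^ 2)) t := by
  have hin : HasDerivAt (fun t : ℝ => (t - c) / √2) (1 / √2) t :=
    ((hasDerivAt_id t).sub_const c).div_const _
  exact ((hasDerivAt_tanh _).comp t hin).congr_deriv (by ring)

lemma eq_zero_of_tendsto_abs_deriv {f : ℝ → ℝ} {a b : ℝ} (hf : Differentiable ℝ f)
    (hfa : Tendsto f atTop (𝓝 a)) (hf' : Tendsto (fun t => |deriv f t|) atTop (𝓝 b)) :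
    b = 0 := by
  have hb : 0 ≤ b := ge_of_tendsto' hf' fun t => abs_nonneg _
  by_contra hb0
  have hbpos : 0 < b := lt_of_le_of_ne hb (Ne.symm hb0)
  obtain ⟨N, hN⟩ := eventually_atTop.mp
    ((hf'.eventually (lt_mem_nhds (half_lt_self hbpos))).and
      (hfa.eventually (Metric.ball_mem_nhds a (by positivity : 0 < b / 4))))
  obtain ⟨ξ, hξ, hslope⟩ :=
    exists_deriv_eq_slope f (lt_add_one N) hf.continuous.continuousOn hf.differentiableOn
  have hderiv := (hN ξ hξ.1.le).1
  have hN₀ := (hN N le_rfl).2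
  have hN₁ := (hN (N + 1) (by linarith)).2
  rw [Real.dist_eq] at hN₀ hN₁
  rw [hslope, add_sub_cancel_left, div_one] at hderiv
  have := abs_sub_le (f (N + 1)) a (f N)
  rw [abs_sub_comm a] at this
  linarith

lemma exists_abs_le_of_tendsto {f : ℝ → ℝ} {a b : ℝ} (hf : Continuous f)
    (htop : Tendsto f atTop (𝓝 a)) (hbot : Tendsto f atBot (𝓝 b)) : ∃ M, ∀ t, |f t| ≤ M := by
  obtain ⟨M, hM⟩ := isBounded_iff_forall_norm_le.mp
    (hf.isBounded_range_iff_isBigO_atTop_atBot.mpr ⟨htop.isBigO_one ℝ, hbot.isBigO_one ℝ⟩)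
  exact ⟨M, fun t => hM _ (mem_range_self t)⟩

lemma mem_Ioo_of_forall_sq_ne_one {f : ℝ → ℝ} (hf : Continuous f)
    (htop : Tendsto f atTop (𝓝 1)) (hbot : Tendsto f atBot (𝓝 (-1)))
    (hne : ∀ t, f t ^ 2 ≠ 1) (t : ℝ) : f t ∈ Ioo (-1) 1 := by
  obtain ⟨a, ha⟩ := (hbot.eventually (eventually_lt_nhds (by norm_num : (-1 : ℝ) < 0))).exists
  obtain ⟨b, hb⟩ := (htop.eventually (eventually_gt_nhds (by norm_num : (0 : ℝ) < 1))).exists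
  by_contra h
  rw [mem_Ioo, not_and_or, not_lt, not_lt] at h
  rcases h with h | h
  · obtain ⟨s, hs⟩ := intermediate_value_univ t b hf ⟨h, by linarith⟩
    exact hne s (by rw [hs]; norm_num)
  · obtain ⟨s, hs⟩ := intermediate_value_univ a t hf ⟨by linarith, h⟩
    exact hne s (by rw [hs]; norm_num)

lemma deriv_pos_of_forall_deriv_ne_zero {f : ℝ → ℝ} {a b : ℝ} (hf : Differentiable ℝ f)
    (hf' : ∀ t, deriv f t ≠ 0) (hbot : Tendsto f atBot (𝓝 a)) (htop : Tendsto f atTop (𝓝 b))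
    (hab : a < b) (t : ℝ) : 0 < deriv f t := by
  rcases hasDerivWithinAt_forall_lt_or_forall_gt_of_forall_ne convex_univ
    (fun x _ => (hf x).hasDerivAt.hasDerivWithinAt) (fun x _ => hf' x) with hneg | hpos
  · have hanti := strictAnti_of_deriv_neg fun x => hneg x (mem_univ x)
    have hb : b ≤ f 0 := le_of_tendsto htop
      ((eventually_ge_atTop 0).mono fun s hs => hanti.antitone hs)
    have ha : f 0 ≤ a := ge_of_tendsto hbot
      ((eventually_le_atBot 0).mono fun s hs => hanti.antitone hs)
    linarith
  · exact hpos t (mem_univ t)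

lemma lipschitzOnWith_mul_one_sub_sq {a : ℝ} (ha : |a| ≤ 1) (M : ℝ) :
    LipschitzOnWith (2 * M).toNNReal (fun x => a * (1 - x ^ 2)) (Icc (-M) M) := by
  refine LipschitzOnWith.of_dist_le_mul fun x hx y hy => ?_
  have hxy : |y + x| ≤ 2 * M := abs_le.mpr ⟨by linarith [hx.1, hy.1], by linarith [hx.2, hy.2]⟩
  calc dist (a * (1 - x ^ 2)) (a * (1 - y ^ 2)) = |a| * |y + x| * dist y x := by
        rw [Real.dist_eq, Real.dist_eq, ← abs_mul, ← abs_mul]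
        congr 1
        ring
    _ ≤ 1 * (2 * M) * dist x y := by rw [dist_comm]; gcongr
    _ ≤ (2 * M).toNNReal * dist x y := by
        rw [one_mul]
        gcongr
        exact le_coe_toNNReal _

/-- `f` solves `x' = a(t) (1 - x²)` with `a = f' / (1 - f²)`, of which `±1` are solutions. -/
lemma eq_of_abs_deriv_le_abs_one_sub_sq {f : ℝ → ℝ} {M : ℝ} (hf : Differentiable ℝ f)
    (hM : ∀ t, |f t| ≤ M) (hf' : ∀ t, |deriv f t| ≤ |1 - f t ^ 2|) {t₀ : ℝ}
    (ht₀ : f t₀ ^ 2 = 1) (t : ℝ) : f t = f t₀ := by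
  set a : ℝ → ℝ := fun t => deriv f t / (1 - f t ^ 2)
  have ha : ∀ t, |a t| ≤ 1 := fun t => by
    rw [abs_div]
    exact div_le_one_of_le₀ (hf' t) (abs_nonneg _)
  have hsol : ∀ t, HasDerivAt f (a t * (1 - f t ^ 2)) t := fun t => by
    rw [div_mul_cancel_of_imp fun h => by simpa [h] using hf' t]
    exact (hf t).hasDerivAt
  have hconst : ∀ t, HasDerivAt (fun _ => f t₀) (a t * (1 - f t₀ ^ 2)) t := fun t => by
    rw [ht₀, sub_self, mul_zero]
    exact hasDerivAt_const _ _
  refine congrFun (ODE_solution_unique_univ (v := fun t x => a t * (1 - x ^ 2))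
    (s := fun _ => Icc (-M) M) (fun t => lipschitzOnWith_mul_one_sub_sq (ha t) M)
    (fun t => ⟨hsol t, abs_le.mp (hM t)⟩) (fun t => ⟨hconst t, abs_le.mp (hM t₀)⟩) rfl) t

lemma exists_eq_tanh_of_hasDerivAt {f : ℝ → ℝ} (hf : ∀ t, HasDerivAt f ((1 - f t ^ 2) / √2) t)
    (hf₁ : ∀ t, f t ∈ Ioo (-1) 1) : ∃ c, ∀ t, f t = tanh ((t - c) / √2) := by
  have ha : |(√2)⁻¹| ≤ 1 := by
    rw [abs_inv, abs_of_pos (by positivity)]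
    exact inv_le_one_of_one_le₀ one_lt_sqrt_two.le
  have hinit : f 0 = tanh ((0 - -(√2 * artanh (f 0))) / √2) := by
    rw [zero_sub, neg_neg, mul_div_cancel_left₀ _ (by positivity), tanh_artanh (hf₁ 0)]
  refine ⟨-(√2 * artanh (f 0)), fun t => congrFun (ODE_solution_unique_univ
    (v := fun _ x => (√2)⁻¹ * (1 - x ^ 2)) (s := fun _ => Icc (-1) 1) (t₀ := 0)
    (fun _ => lipschitzOnWith_mul_one_sub_sq ha 1) (fun t => ⟨?_, Ioo_subset_Icc_self (hf₁ t)⟩)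
    (fun t => ⟨hasDerivAt_tanh_sub_div_sqrt_two _ t,
      (neg_one_lt_tanh _).le, (tanh_lt_one _).le⟩) hinit) t⟩
  rw [inv_mul_eq_div]
  exact hf t

section AllenCahn

variable {v : ℝ → ℝ}

lemma exists_deriv_sq_eq_of_allenCahn (hv1 : Differentiable ℝ v)
    (hv2 : Differentiable ℝ (deriv v)) (heq : ∀ t, deriv (deriv v) t + v t - v t ^ 3 = 0) :
    ∃ L, ∀ t, deriv v t ^ 2 = L + (1 - v t ^ 2) ^ 2 / 2 := by
  have henergy : ∀ t, HasDerivAt (fun t => deriv v t ^ 2 - (1 - v t ^ 2) ^ 2 / 2) 0 t := by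
    intro t
    have h := ((hv2 t).hasDerivAt.pow 2).sub ((((hv1 t).hasDerivAt.pow 2).const_sub 1).pow 2
      |>.div_const 2)
    refine h.congr_deriv ?_
    simp only [Pi.pow_apply]
    linear_combination (2 * deriv v t) * heq t
  refine ⟨deriv v 0 ^ 2 - (1 - v 0 ^ 2) ^ 2 / 2, fun t => ?_⟩
  have := is_const_of_deriv_eq_zero (fun s => (henergy s).differentiableAt)
    (fun s => (henergy s).deriv) t 0
  linarith

lemma deriv_sq_eq_of_allenCahn (hv1 : Differentiable ℝ v) (hv2 : Differentiable ℝ (deriv v))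
    (heq : ∀ t, deriv (deriv v) t + v t - v t ^ 3 = 0) (htop : Tendsto v atTop (𝓝 1)) (t : ℝ) :
    deriv v t ^ 2 = (1 - v t ^ 2) ^ 2 / 2 := by
  obtain ⟨L, hL⟩ := exists_deriv_sq_eq_of_allenCahn hv1 hv2 heq
  have hsq : Tendsto (fun t => deriv v t ^ 2) atTop (𝓝 L) := by
    have h := tendsto_const_nhds (x := L) |>.add
      (((tendsto_const_nhds (x := (1 : ℝ)) |>.sub (htop.pow 2)).pow 2).div_const 2)
    norm_num at h
    exact h.congr fun t => (hL t).symm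
  have hL0 : L = 0 := by
    refine sqrt_eq_zero (ge_of_tendsto' hsq fun t => sq_nonneg _) |>.mp ?_
    exact eq_zero_of_tendsto_abs_deriv hv1 htop (by simpa only [sqrt_sq_eq_abs] using hsq.sqrt)
  rw [hL t, hL0, zero_add]

end AllenCahn

/-- Uniqueness up to translation of the heteroclinic solution of the 1D
Allen–Cahn equation: any twice differentiable `v` with `v'' + v - v³ = 0`,
`v → 1` at `+∞` and `v → -1` at `-∞` is a translate of `tanh (·/√2)`. -/
theorem stmt_1 (v : ℝ → ℝ)
    (hv1 : Differentiable ℝ v)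
    (hv2 : Differentiable ℝ (deriv v))
    (heq : ∀ t : ℝ, deriv (deriv v) t + v t - (v t) ^ 3 = 0)
    (htop : Tendsto v atTop (nhds 1))
    (hbot : Tendsto v atBot (nhds (-1))) :
    ∃ c : ℝ, ∀ t : ℝ, v t = Real.tanh ((t - c) / Real.sqrt 2) := by
  have hsq := deriv_sq_eq_of_allenCahn hv1 hv2 heq htop
  have habs : ∀ t, |deriv v t| ≤ |1 - v t ^ 2| := fun t =>
    sq_le_sq.mp (by rw [hsq t]; nlinarith [sq_nonneg (1 - v t ^ 2)])
  obtain ⟨M, hM⟩ := exists_abs_le_of_tendsto hv1.continuous htop hbot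
  have hne : ∀ t, v t ^ 2 ≠ 1 := fun t₀ ht₀ => by
    have hconst : v = fun _ => v t₀ := funext (eq_of_abs_deriv_le_abs_one_sub_sq hv1 hM habs ht₀)
    rw [hconst] at htop hbot
    have := (tendsto_nhds_unique tendsto_const_nhds htop).symm.trans
      (tendsto_nhds_unique tendsto_const_nhds hbot)
    norm_num at this
  have hIoo := mem_Ioo_of_forall_sq_ne_one hv1.continuous htop hbot hne
  have hpos := deriv_pos_of_forall_deriv_ne_zero hv1 (fun t h => hne t (by
    nlinarith [hsq t, h, (hIoo t).1, (hIoo t).2]))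
    hbot htop (by norm_num)
  refine exists_eq_tanh_of_hasDerivAt (fun t => ?_) hIoo
  have hw : 0 < 1 - v t ^ 2 := by nlinarith [(hIoo t).1, (hIoo t).2]
  have hode : deriv v t = (1 - v t ^ 2) / √2 :=
    (pow_left_inj₀ (hpos t).le (div_nonneg hw.le (sqrt_nonneg 2)) two_ne_zero).mp (by
      rw [hsq t, div_pow, sq_sqrt zero_le_two])
  exact hode ▸ (hv1 t).hasDerivAt
end

section
/- The Lambert function W is infinitely differentiable on (0,∞), and for every integer i ≥ 1 there exists a constant C_i > 0 such that |W^{(i)}(z)| ≤ C_i/(1+z)^{i} for all z > 0, where W^{(i)} denotes the i-th derivative of W. -/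
open Real Filter Set Polynomial
open scoped Topology

private lemma lam_inj {a b : ℝ} (ha : 0 ≤ a) (hb : 0 ≤ b)
    (h : a * Real.exp a = b * Real.exp b) : a = b := by
  rcases lt_trichotomy a b with hab | hab | hab
  · exfalso
    have h1 : a * Real.exp a < b * Real.exp a :=
      mul_lt_mul_of_pos_right hab (Real.exp_pos a)
    have h2 : b * Real.exp a ≤ b * Real.exp b := by
      apply mul_le_mul_of_nonneg_left (Real.exp_le_exp.2 hab.le) hb
    linarith
  · exact hab
  · exfalso
    have h1 : b * Real.exp b < a * Real.exp b :=
      mul_lt_mul_of_pos_right hab (Real.exp_pos b)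
    have h2 : a * Real.exp b ≤ a * Real.exp a := by
      apply mul_le_mul_of_nonneg_left (Real.exp_le_exp.2 hab.le) ha
    linarith

private lemma lam_key (W : ℝ → ℝ)
    (hW : ∀ z : ℝ, 0 ≤ z → 0 ≤ W z ∧ W z * Real.exp (W z) = z)
    {z : ℝ} (hz : 0 < z) :
    0 < W z ∧ ContDiffAt ℝ (⊤ : ℕ∞) W z ∧
      HasDerivAt W (Real.exp (-(W z)) / (1 + W z)) z := by
  set f : ℝ → ℝ := fun x => x * Real.exp x with hf
  obtain ⟨hw0, hwz⟩ := hW z hz.le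
  set w := W z with hwdef
  have hw : 0 < w := by
    rcases hw0.lt_or_eq with h | h
    · exact h
    · exfalso; rw [← h] at hwz; simp at hwz; linarith
  have hfw : f w = z := hwz
  have hdf : HasDerivAt f ((1 + w) * Real.exp w) w := by
    have := (hasDerivAt_id w).mul (Real.hasDerivAt_exp w)
    refine this.congr_deriv ?_
    simp [id]; ring
  have hd0 : (1 + w) * Real.exp w ≠ 0 := by positivity
  have hcf : ContDiffAt ℝ (⊤ : ℕ∞) f w := (contDiff_id.mul Real.contDiff_exp).contDiffAt
  have hsd : HasStrictDerivAt f ((1 + w) * Real.exp w) w := by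
    have h := hcf.hasStrictDerivAt (by simp)
    rwa [hdf.deriv] at h
  have hg : ∀ᶠ x in 𝓝 w, W (f x) = x := by
    filter_upwards [Ioi_mem_nhds hw] with x hx
    have hx0 : (0:ℝ) < x := hx
    have hfx : 0 ≤ f x := by positivity
    obtain ⟨h1, h2⟩ := hW (f x) hfx
    exact lam_inj h1 hx0.le h2
  have hFD : HasFDerivAt f
      (ContinuousLinearEquiv.unitsEquivAut ℝ (Units.mk0 _ hd0) : ℝ →L[ℝ] ℝ) w :=
    hdf.hasFDerivAt_equiv hd0
  have hsf := hcf.hasStrictFDerivAt' hFD (by simp)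
  have hginv : ContDiffAt ℝ (⊤ : ℕ∞) (hcf.localInverse hFD (by simp)) (f w) :=
    hcf.to_localInverse hFD (by simp)
  have huniq : ∀ᶠ y in 𝓝 (f w), W y = hsf.localInverse f _ w y :=
    hsf.localInverse_unique hg
  rw [hfw] at hginv huniq
  have hcd : ContDiffAt ℝ (⊤ : ℕ∞) W z := hginv.congr_of_eventuallyEq huniq
  have hWd : HasStrictDerivAt W ((1 + w) * Real.exp w)⁻¹ (f w) :=
    hsd.to_local_left_inverse hd0 hg
  have : HasDerivAt W (Real.exp (-w) / (1 + w)) z := by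
    rw [hfw] at hWd
    refine hWd.hasDerivAt.congr_deriv ?_
    rw [Real.exp_neg]
    field_simp
  exact ⟨hw, hcd, this⟩

open Real Filter Set Polynomial
open scoped Topology

private lemma poly_bound (p : Polynomial ℝ) (m : ℕ) (hp : p.natDegree ≤ m)
    {w : ℝ} (hw : 0 ≤ w) :
    |p.eval w| ≤ (∑ i ∈ Finset.range (m+1), |p.coeff i|) * (1+w)^m := by
  have h1 : p.eval w = ∑ i ∈ Finset.range (m+1), p.coeff i * w ^ i := by
    rw [eval_eq_sum_range' (Nat.lt_succ_of_le hp)]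
  rw [h1]
  calc |∑ i ∈ Finset.range (m+1), p.coeff i * w ^ i|
      ≤ ∑ i ∈ Finset.range (m+1), |p.coeff i * w ^ i| := Finset.abs_sum_le_sum_abs _ _
    _ ≤ ∑ i ∈ Finset.range (m+1), |p.coeff i| * (1+w)^m := by
        apply Finset.sum_le_sum
        intro i hi
        rw [abs_mul]
        apply mul_le_mul_of_nonneg_left _ (abs_nonneg _)
        rw [abs_of_nonneg (pow_nonneg hw i)]
        calc w ^ i ≤ (1+w) ^ i := pow_le_pow_left₀ hw (by linarith) i
          _ ≤ (1+w) ^ m := pow_le_pow_right₀ (by linarith) (by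
              simpa using Nat.lt_succ_iff.mp (Finset.mem_range.mp hi))
    _ = (∑ i ∈ Finset.range (m+1), |p.coeff i|) * (1+w)^m := by
        rw [Finset.sum_mul]

section Test
variable (W : ℝ → ℝ) (hW : ∀ z : ℝ, 0 ≤ z → 0 ≤ W z ∧ W z * Real.exp (W z) = z)

section LamAux
variable (W : ℝ → ℝ)

private lemma lam_claim
    (hkey : ∀ {z : ℝ}, 0 < z → 0 < W z ∧ ContDiffAt ℝ (⊤ : ℕ∞) W z ∧
      HasDerivAt W (Real.exp (-(W z)) / (1 + W z)) z) :
    ∀ m : ℕ, ∃ p : Polynomial ℝ, p.natDegree ≤ m ∧ ∀ z : ℝ, 0 < z →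
    iteratedDeriv (m+1) W z
      = Real.exp (-((m:ℝ)+1) * W z) * p.eval (W z) / (1 + W z)^(2*m+1) := by
  intro m
  induction m with
  | zero =>
    refine ⟨1, by simp, fun z hz => ?_⟩
    obtain ⟨hw, -, hWd⟩ := hkey hz
    rw [iteratedDeriv_one, hWd.deriv]
    norm_num
  | succ m ih =>
    obtain ⟨p, hpd, hpf⟩ := ih
    refine ⟨(derivative p - C ((m:ℝ)+1) * p) * (1 + X) - C (2*(m:ℝ)+1) * p, ?_, ?_⟩
    · have h1 : (derivative p).natDegree ≤ m :=
        le_trans (natDegree_derivative_le p) (by omega)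
      have h2 : (C ((m:ℝ)+1) * p).natDegree ≤ m :=
        le_trans (natDegree_C_mul_le _ _) hpd
      have h3 : (derivative p - C ((m:ℝ)+1) * p).natDegree ≤ m :=
        le_trans (natDegree_sub_le _ _) (max_le h1 h2)
      have h4 : ((1 : ℝ[X]) + X).natDegree ≤ 1 :=
        le_trans (natDegree_add_le _ _) (by simp)
      have h5 : ((derivative p - C ((m:ℝ)+1) * p) * (1 + X)).natDegree ≤ m + 1 :=
        le_trans (natDegree_mul_le) (by omega)
      have h6 : (C (2*(m:ℝ)+1) * p).natDegree ≤ m + 1 :=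
        le_trans (natDegree_C_mul_le _ _) (by omega)
      exact le_trans (natDegree_sub_le _ _) (max_le h5 h6)
    · intro z hz
      obtain ⟨hw, -, hWd⟩ := hkey hz
      set w := W z with hwdef
      rw [iteratedDeriv_succ]
      have hev : iteratedDeriv (m+1) W =ᶠ[𝓝 z]
          (fun y => Real.exp (-((m:ℝ)+1) * W y) * p.eval (W y) / (1 + W y)^(2*m+1)) := by
        filter_upwards [Ioi_mem_nhds hz] with y hy
        exact hpf y hy
      have h1 : HasDerivAt (fun x : ℝ => Real.exp (-((m:ℝ)+1) * x))
          (Real.exp (-((m:ℝ)+1) * w) * (-((m:ℝ)+1))) w := by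
        simpa using ((hasDerivAt_id w).const_mul (-((m:ℝ)+1))).exp
      have h2 := p.hasDerivAt w
      have h3 := h1.mul h2
      have h4 : HasDerivAt (fun x : ℝ => (1+x)^(2*m+1))
          ((2*m+1 : ℕ) * (1+w)^(2*m) * 1) w := by
        simpa using ((hasDerivAt_id w).const_add 1).fun_pow (2*m+1)
      have hden : (1 + w) ^ (2*m+1) ≠ 0 := by positivity
      have h5 := h3.div h4 hden
      have h6 := h5.comp z hWd
      have h7 : HasDerivAt (iteratedDeriv (m+1) W) _ z := h6.congr_of_eventuallyEq hev
      rw [h7.deriv]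
      have hE : Real.exp (-((m:ℝ)+1+1) * w) = Real.exp (-((m:ℝ)+1) * w) * Real.exp (-w) := by
        rw [← Real.exp_add]; ring_nf
      push_cast
      simp only [eval_sub, eval_mul, eval_add, eval_one, eval_X, eval_C, Function.comp, Pi.mul_apply]
      rw [hE]
      have h1w : (1 : ℝ) + w ≠ 0 := by
        have := (hkey hz).1
        rw [← hwdef] at this
        linarith
      field_simp
      ring

private lemma lam_bound
    (hW : ∀ z : ℝ, 0 ≤ z → 0 ≤ W z ∧ W z * Real.exp (W z) = z)
    (m : ℕ) (p : Polynomial ℝ) (hpd : p.natDegree ≤ m)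
    (hpf : ∀ z : ℝ, 0 < z → iteratedDeriv (m+1) W z
      = Real.exp (-((m:ℝ)+1) * W z) * p.eval (W z) / (1 + W z)^(2*m+1)) :
    ∃ C : ℝ, 0 < C ∧ ∀ z : ℝ, 0 < z →
      |iteratedDeriv (m+1) W z| ≤ C / (1 + z) ^ (m+1) := by
  set M : ℝ := ∑ i ∈ Finset.range (m+1), |p.coeff i| with hM
  have hM0 : 0 ≤ M := Finset.sum_nonneg fun i _ => abs_nonneg _
  refine ⟨M + 1, by linarith, fun z hz => ?_⟩
  obtain ⟨hw0, hwz⟩ := hW z hz.le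
  set w := W z with hwdef
  have h1w : (0:ℝ) < 1 + w := by linarith
  have h1z : (0:ℝ) < 1 + z := by linarith
  have hzle : 1 + z ≤ (1 + w) * Real.exp w := by
    have h1 : (1:ℝ) ≤ Real.exp w := Real.one_le_exp hw0
    nlinarith [Real.exp_pos w]
  have hexp : Real.exp (-w) ≤ (1+w)/(1+z) := by
    have he : Real.exp (-w) = (1+w)/((1+w)*Real.exp w) := by
      rw [Real.exp_neg]; field_simp
    rw [he]
    gcongr
  rw [hpf z hz, ← hwdef]
  have hpe : |p.eval w| ≤ M * (1+w)^m := poly_bound p m hpd hw0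
  have hE : Real.exp (-((m:ℝ)+1) * w) = Real.exp (-w) ^ (m+1) := by
    rw [← Real.exp_nat_mul]
    push_cast
    ring_nf
  rw [abs_div, abs_mul, abs_of_pos (Real.exp_pos _), abs_of_pos (pow_pos h1w _), hE]
  calc Real.exp (-w) ^ (m+1) * |p.eval w| / (1+w)^(2*m+1)
      ≤ ((1+w)/(1+z)) ^ (m+1) * (M * (1+w)^m) / (1+w)^(2*m+1) := by
        gcongr
    _ = M / (1+z)^(m+1) := by
        rw [div_pow]
        field_simp
        ring
    _ ≤ (M+1) / (1+z)^(m+1) := by gcongr; linarith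

end LamAux

/-- The Lambert function `W` (defined implicitly by `W(z) e^{W(z)} = z`,
`W(z) ≥ 0`, for `z ≥ 0`) is smooth on `(0, ∞)` and for every `i ≥ 1` there is
`C_i > 0` with `|W^{(i)}(z)| ≤ C_i / (1+z)^i` for all `z > 0`. -/
theorem stmt_8 (W : ℝ → ℝ)
    (hW : ∀ z : ℝ, 0 ≤ z → 0 ≤ W z ∧ W z * Real.exp (W z) = z) :
    ContDiffOn ℝ (⊤ : ℕ∞) W (Set.Ioi 0) ∧
    ∀ i : ℕ, 1 ≤ i → ∃ C : ℝ, 0 < C ∧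
      ∀ z : ℝ, 0 < z → |iteratedDeriv i W z| ≤ C / (1 + z) ^ i := by
  constructor
  · exact fun z hz => ((lam_key W hW hz).2.1).contDiffWithinAt
  · intro i hi
    obtain ⟨m, rfl⟩ : ∃ m, i = m + 1 := ⟨i - 1, (Nat.succ_pred_eq_of_pos hi).symm⟩
    obtain ⟨p, hpd, hpf⟩ := lam_claim W (fun {z} hz => lam_key W hW hz) m
    exact lam_bound W hW m p hpd hpf
end Test
end

section
/- Define f_1(z) = z/(1+z) and recursively f_{i+1}(z) = i·f_i(z) − (z/(1+z))·f_i'(z) for i ≥ 1. Then for every i ≥ 1: each f_i is infinitely differentiable on (0,∞); every derivative f_i^{(l)} (l ≥ 0) is bounded on (0,∞); and there exists a constant c_i > 0 such that f_i(z)/z^{i} → c_i as z → 0⁺, i.e. f_i(z) = c_i z^{i}(1 + o(1)) as z → 0⁺. -/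
open Filter Polynomial

/-- The auxiliary polynomials: `Rp 1 = 1`, `Rp (i+1) = i(2-X) Rp i - (1-X)^2 (Rp i)'`. -/
noncomputable def Rp : ℕ → ℝ[X]
  | 0 => 1
  | 1 => 1
  | (i+2) => C ((i+1 : ℕ) : ℝ) * (2 - X) * Rp (i+1) - (1 - X)^2 * derivative (Rp (i+1))

/-- The substitution map `P ↦ (z ↦ P(z/(1+z)))`. -/
noncomputable def phi (P : ℝ[X]) (z : ℝ) : ℝ := P.eval (z / (1+z))

/-- Derivative operator on the polynomial side. -/
noncomputable def Dop (P : ℝ[X]) : ℝ[X] := (1 - X)^2 * derivative P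

lemma contDiff_eval (P : ℝ[X]) : ContDiff ℝ (⊤ : ℕ∞) fun x : ℝ => P.eval x := by
  induction P using Polynomial.induction_on' with
  | add p q hp hq => simpa [Polynomial.eval_add] using hp.add hq
  | monomial n a => simpa [Polynomial.eval_monomial] using contDiff_const.mul (contDiff_id.pow n)

lemma Rp_sign : ∀ i : ℕ, (∀ k, 0 ≤ (-1:ℝ)^k * (Rp i).coeff k) ∧ 0 < (Rp i).coeff 0 := by
  intro i
  induction i with
  | zero => constructor <;> simp [Rp, Polynomial.coeff_one]
    <;> intro k <;> rcases k with _|k <;> simp [pow_succ]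
  | succ i ih =>
    rcases i with _|i
    · constructor
      · intro k; rcases k with _|k <;> simp [Rp, Polynomial.coeff_one]
      · simp [Rp]
    · -- i+2 case
      obtain ⟨hsign, hpos⟩ := ih
      have ha : (1:ℝ) ≤ ((i+1 : ℕ) : ℝ) := by exact_mod_cast Nat.one_le_iff_ne_zero.mpr (by omega)
      have expand : Rp (i+2) = C ((i+1 : ℕ) : ℝ) * (2 - X) * Rp (i+1)
          - (1 - X)^2 * derivative (Rp (i+1)) := by simp [Rp]
      set P := Rp (i+1) with hP
      set a : ℝ := ((i+1 : ℕ) : ℝ) with haa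
      have coeffF : ∀ k, (Rp (i+2)).coeff k =
          a * (2 * P.coeff k - (X * P).coeff k)
          - ((derivative P).coeff k - 2 * (X * derivative P).coeff k
              + (X^2 * derivative P).coeff k) := by
        intro k
        rw [expand]
        have h1 : C a * (2 - X) * P = C a * (2 * P) - C a * (X * P) := by ring
        have h2 : (1 - X)^2 * derivative P =
            derivative P - 2 * (X * derivative P) + X^2 * (derivative P) := by ring
        rw [h1, h2]
        simp [Polynomial.coeff_sub, Polynomial.coeff_add, Polynomial.coeff_C_mul]
        ring
      constructor
      · intro k
        rcases k with _|k
        · -- k = 0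
          have h0 := coeffF 0
          simp [Polynomial.coeff_derivative] at h0
          have hr1 : P.coeff 1 ≤ 0 := by have := hsign 1; simp at this; linarith
          have hr0 : 0 ≤ P.coeff 0 := hpos.le
          simp [h0]
          nlinarith [mul_nonneg (by linarith : (0:ℝ) ≤ a) hr0]
        rcases k with _|k
        · -- k = 1
          have h1 := coeffF 1
          rw [Polynomial.coeff_X_mul, Polynomial.coeff_X_mul] at h1
          have hx2 : (X^2 * derivative P).coeff 1 = 0 := by
            simpa using Polynomial.coeff_X_pow_mul' (derivative P) 2 1
          rw [hx2] at h1
          simp [Polynomial.coeff_derivative] at h1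
          have hr1 : P.coeff 1 ≤ 0 := by have := hsign 1; simp at this; linarith
          have hr0 : 0 ≤ P.coeff 0 := hpos.le
          have hr2 : 0 ≤ P.coeff 2 := by have := hsign 2; simpa [neg_pow] using this
          simp [h1, pow_one]
          nlinarith [mul_nonneg (by linarith : (0:ℝ) ≤ a) (neg_nonneg.mpr hr1),
            mul_nonneg (by linarith : (0:ℝ) ≤ a) hr0]
        · -- k + 2
          have h2 := coeffF (k+2)
          rw [Polynomial.coeff_X_mul, Polynomial.coeff_X_mul] at h2
          have hx2 : (X^2 * derivative P).coeff (k+2) = (derivative P).coeff k := by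
            simpa using Polynomial.coeff_X_pow_mul (derivative P) 2 k
          rw [hx2] at h2
          simp only [Polynomial.coeff_derivative] at h2
          set s : ℝ := (-1:ℝ)^k with hs
          have hkk : (-1:ℝ)^(k+2) = s := by rw [hs]; ring
          have hkk1 : (-1:ℝ)^(k+1) = -s := by rw [hs]; ring
          have hkk3 : (-1:ℝ)^(k+3) = -s := by rw [hs]; ring
          have h_k2 : 0 ≤ s * P.coeff (k+2) := by have := hsign (k+2); rwa [hkk] at this
          have h_k1 : 0 ≤ -s * P.coeff (k+1) := by have := hsign (k+1); rwa [hkk1] at this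
          have h_k3 : 0 ≤ -s * P.coeff (k+3) := by have := hsign (k+3); rwa [hkk3] at this
          rw [h2, hkk]
          push_cast
          nlinarith [mul_nonneg (by linarith : (0:ℝ) ≤ a) h_k2,
            mul_nonneg (by linarith : (0:ℝ) ≤ a) h_k1,
            mul_nonneg (by positivity : (0:ℝ) ≤ (k:ℝ)+3) h_k3,
            mul_nonneg (by positivity : (0:ℝ) ≤ (k:ℝ)+2) h_k2,
            mul_nonneg (by positivity : (0:ℝ) ≤ (k:ℝ)+1) h_k1]
      · -- coeff 0 positive
        have h0 := coeffF 0
        simp [Polynomial.coeff_derivative] at h0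
        have hr1 : P.coeff 1 ≤ 0 := by have := hsign 1; simp at this; linarith
        simp [h0]
        nlinarith

/-- The recursion on the `Q_i = X^i * R_i` side. -/
lemma Qrec (i : ℕ) (hi : 1 ≤ i) :
    X^(i+1) * Rp (i+1) = C (i:ℝ) * (X^i * Rp i)
      - X * (1-X)^2 * derivative (X^i * Rp i) := by
  obtain ⟨j, rfl⟩ : ∃ j, i = j + 1 := ⟨i - 1, by omega⟩
  have hder : derivative (X^(j+1) * Rp (j+1)) =
      C ((j+1 : ℕ) : ℝ) * X^j * Rp (j+1) + X^(j+1) * derivative (Rp (j+1)) := by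
    rw [Polynomial.derivative_mul, Polynomial.derivative_X_pow, Nat.add_sub_cancel]
  rw [hder]
  have hR : Rp (j+2) = C ((j+1 : ℕ) : ℝ) * (2 - X) * Rp (j+1)
      - (1 - X)^2 * derivative (Rp (j+1)) := by simp [Rp]
  rw [show j + 1 + 1 = j + 2 from rfl, hR]
  ring

lemma hasDerivAt_phi (P : ℝ[X]) {z : ℝ} (hz : -1 < z) :
    HasDerivAt (phi P) ((Dop P).eval (z/(1+z))) z := by
  have h0 : (1:ℝ) + z ≠ 0 := by intro h; linarith
  have h1 : HasDerivAt (fun z : ℝ => 1 + z) 1 z := by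
    exact (hasDerivAt_id' z).const_add 1
  have hv : HasDerivAt (fun z : ℝ => z/(1+z)) ((1*(1+z) - z*1)/(1+z)^2) z := by
    exact (hasDerivAt_id' z).div h1 h0
  have : HasDerivAt (phi P) ((derivative P).eval (z/(1+z)) * ((1*(1+z) - z*1)/(1+z)^2)) z :=
    by have h := (P.hasDerivAt (z/(1+z))).comp z hv; exact h
  convert this using 1
  simp only [Dop, Polynomial.eval_mul, Polynomial.eval_pow, Polynomial.eval_sub,
    Polynomial.eval_one, Polynomial.eval_X]
  field_simp
  ring

lemma deriv_phi (P : ℝ[X]) {z : ℝ} (hz : -1 < z) :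
    deriv (phi P) z = (Dop P).eval (z/(1+z)) := (hasDerivAt_phi P hz).deriv

lemma iter_phi (P : ℝ[X]) (l : ℕ) : ∀ z : ℝ, -1 < z →
    iteratedDeriv l (phi P) z = phi (Dop^[l] P) z := by
  induction l with
  | zero => intro z hz; simp
  | succ l ih =>
    intro z hz
    rw [iteratedDeriv_succ]
    have hev : iteratedDeriv l (phi P) =ᶠ[nhds z] phi (Dop^[l] P) :=
      eventually_of_mem (Ioi_mem_nhds hz) fun w hw => ih w hw
    rw [hev.deriv_eq, deriv_phi _ hz, Function.iterate_succ_apply', phi]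

/-- Properties of the family `f_i` defined by `f₁(z) = z/(1+z)` and
`f_{i+1} = i f_i - (z/(1+z)) f_i'`: each `f_i` (i ≥ 1) is smooth on `(0,∞)`,
all its derivatives are bounded on `(0,∞)`, and `f_i(z) = c_i z^i (1 + o(1))`
as `z → 0⁺` for some `c_i > 0`. -/
theorem stmt_9 (f : ℕ → ℝ → ℝ)
    (hf1 : ∀ z : ℝ, f 1 z = z / (1 + z))
    (hfrec : ∀ i : ℕ, 1 ≤ i → ∀ z : ℝ,
      f (i + 1) z = (i : ℝ) * f i z - (z / (1 + z)) * deriv (f i) z) :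
    ∀ i : ℕ, 1 ≤ i →
      ContDiffOn ℝ (⊤ : ℕ∞) (f i) (Set.Ioi 0) ∧
      (∀ l : ℕ, ∃ M : ℝ, ∀ z : ℝ, 0 < z → |iteratedDeriv l (f i) z| ≤ M) ∧
      (∃ c : ℝ, 0 < c ∧
        Tendsto (fun z => f i z / z ^ i) (nhdsWithin 0 (Set.Ioi 0)) (nhds c)) := by
  -- key equality
  have f_eq : ∀ i : ℕ, 1 ≤ i → ∀ z : ℝ, -1 < z → f i z = phi (X^i * Rp i) z := by
    intro i hi
    induction i, hi using Nat.le_induction with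
    | base => intro z hz; simp [hf1 z, phi, Rp]
    | succ i hi ih =>
      intro z hz
      rw [hfrec i hi z]
      have hd : deriv (f i) z = deriv (phi (X^i * Rp i)) z :=
        Filter.EventuallyEq.deriv_eq (eventually_of_mem (Ioi_mem_nhds hz) fun w hw => ih w hw)
      rw [hd, deriv_phi _ hz, ih z hz]
      have h2 := congrArg (fun P : ℝ[X] => P.eval (z/(1+z))) (Qrec i hi)
      simp only [Polynomial.eval_sub, Polynomial.eval_mul, Polynomial.eval_C,
        Polynomial.eval_X, Polynomial.eval_pow, Polynomial.eval_one] at h2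
      simp only [phi, Dop, Polynomial.eval_mul, Polynomial.eval_pow, Polynomial.eval_sub,
        Polynomial.eval_one, Polynomial.eval_X]
      rw [h2]
      ring
  intro i hi
  have heq : ∀ z ∈ Set.Ioi (-1:ℝ), f i z = phi (X^i * Rp i) z := fun z hz => f_eq i hi z hz
  refine ⟨?_, ?_, ?_⟩
  · -- smoothness
    have hv : ContDiffOn ℝ (⊤ : ℕ∞) (fun z : ℝ => z/(1+z)) (Set.Ioi 0) := by
      apply ContDiffOn.div contDiffOn_id (contDiffOn_const.add contDiffOn_id)
      intro z hz h
      simp only [id_eq] at h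
      have : (0:ℝ) < z := hz
      linarith
    have hφ : ContDiffOn ℝ (⊤ : ℕ∞) (phi (X^i * Rp i)) (Set.Ioi 0) :=
      (contDiff_eval (X^i * Rp i)).comp_contDiffOn hv
    exact hφ.congr fun z hz => heq z (by simp at hz ⊢; linarith)
  · -- boundedness of all derivatives
    intro l
    obtain ⟨M, hM⟩ : ∃ M, ∀ v ∈ Set.Icc (0:ℝ) 1, ‖(Dop^[l] (X^i * Rp i)).eval v‖ ≤ M :=
      isCompact_Icc.exists_bound_of_continuousOn
        ((Dop^[l] (X^i * Rp i)).continuous.continuousOn)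
    refine ⟨M, fun z hz => ?_⟩
    have hz1 : (-1:ℝ) < z := by linarith
    have h1 : iteratedDeriv l (f i) z = iteratedDeriv l (phi (X^i * Rp i)) z :=
      Filter.EventuallyEq.iteratedDeriv_eq l
        (eventually_of_mem (Ioi_mem_nhds hz1) fun w hw => heq w hw)
    rw [h1, iter_phi _ l z hz1]
    have hv01 : z/(1+z) ∈ Set.Icc (0:ℝ) 1 := by
      constructor
      · positivity
      · rw [div_le_one (by linarith)]; linarith
    have := hM _ hv01
    rwa [Real.norm_eq_abs] at this
  · -- the limit
    refine ⟨(Rp i).eval 0, ?_, ?_⟩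
    · rw [← Polynomial.coeff_zero_eq_eval_zero]
      exact (Rp_sign i).2
    · have key : ∀ z ∈ Set.Ioi (0:ℝ),
          (fun z : ℝ => (Rp i).eval (z/(1+z)) / (1+z)^i) z = f i z / z^i := by
        intro z hz
        have hz0 : (0:ℝ) < z := hz
        rw [f_eq i hi z (by linarith)]
        simp only [phi, Polynomial.eval_mul, Polynomial.eval_pow, Polynomial.eval_X]
        rw [div_pow]
        field_simp
      have hcont : ContinuousAt (fun z : ℝ => (Rp i).eval (z/(1+z)) / (1+z)^i) 0 := by
        apply ContinuousAt.div
        · exact (Rp i).continuous.continuousAt.comp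
            (ContinuousAt.div continuousAt_id (by fun_prop) (by norm_num))
        · fun_prop
        · norm_num
      have h0 : (fun z : ℝ => (Rp i).eval (z/(1+z)) / (1+z)^i) 0 = (Rp i).eval 0 := by
        norm_num
      have ht : Tendsto (fun z : ℝ => (Rp i).eval (z/(1+z)) / (1+z)^i)
          (nhdsWithin 0 (Set.Ioi 0)) (nhds ((Rp i).eval 0)) := by
        rw [← h0]
        exact hcont.tendsto.mono_left nhdsWithin_le_nhds
      exact ht.congr' (eventually_of_mem self_mem_nhdsWithin key)
end

section
/- For every integer i ≥ 1 and every z > 0, the i-th derivative of the Lambert function satisfies W^{(i)}(z) = ((−1)^{i+1}/z^{i})·f_i(W(z)), where the functions f_i are defined recursively by f_1(z) = z/(1+z) and f_{i+1}(z) = i·f_i(z) − (z/(1+z))·f_i'(z). -/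
/-- Formula for the derivatives of the Lambert function: for every `i ≥ 1` and
`z > 0`, `W^{(i)}(z) = ((-1)^{i+1} / z^i) f_i(W(z))`, where `f₁(z) = z/(1+z)`
and `f_{i+1} = i f_i - (z/(1+z)) f_i'`. -/
theorem stmt_10 (W : ℝ → ℝ)
    (hW : ∀ z : ℝ, 0 ≤ z → 0 ≤ W z ∧ W z * Real.exp (W z) = z)
    (hWsmooth : ContDiffOn ℝ (⊤ : ℕ∞) W (Set.Ioi 0))
    (f : ℕ → ℝ → ℝ)
    (hf1 : ∀ z : ℝ, f 1 z = z / (1 + z))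
    (hfrec : ∀ i : ℕ, 1 ≤ i → ∀ z : ℝ,
      f (i + 1) z = (i : ℝ) * f i z - (z / (1 + z)) * deriv (f i) z) :
    ∀ i : ℕ, 1 ≤ i → ∀ z : ℝ, 0 < z →
      iteratedDeriv i W z = ((-1 : ℝ) ^ (i + 1) / z ^ i) * f i (W z) := by
  -- W is positive on positive reals
  have hWpos : ∀ z : ℝ, 0 < z → 0 < W z := by
    intro z hz
    rcases (hW z hz.le) with ⟨h0, h1⟩
    rcases lt_or_eq_of_le h0 with h | h
    · exact h
    · exfalso; rw [← h] at h1; simp at h1; linarith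
  have h1W : ∀ z : ℝ, 0 < z → (1 : ℝ) + W z ≠ 0 := by
    intro z hz; have := hWpos z hz; positivity
  -- derivative of W
  have hW' : ∀ z : ℝ, 0 < z → HasDerivAt W (W z / (z * (1 + W z))) z := by
    intro z hz
    have hmem : Set.Ioi (0:ℝ) ∈ nhds z := isOpen_Ioi.mem_nhds hz
    have hdiff : DifferentiableAt ℝ W z :=
      (hWsmooth.differentiableOn (by simp)).differentiableAt hmem
    have hd : HasDerivAt W (deriv W z) z := hdiff.hasDerivAt
    have hh : HasDerivAt (fun z => W z * Real.exp (W z))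
        (deriv W z * Real.exp (W z) + W z * (Real.exp (W z) * deriv W z)) z :=
      hd.mul hd.exp
    have heq : (fun z => W z * Real.exp (W z)) =ᶠ[nhds z] id :=
      Filter.eventuallyEq_of_mem hmem (fun x hx => (hW x (le_of_lt hx)).2)
    have hh1 : HasDerivAt (fun z => W z * Real.exp (W z)) 1 z :=
      (hasDerivAt_id z).congr_of_eventuallyEq heq
    have huniq : deriv W z * Real.exp (W z) + W z * (Real.exp (W z) * deriv W z) = 1 :=
      hh.unique hh1
    have hWez : W z * Real.exp (W z) = z := (hW z hz.le).2
    have hWz := hWpos z hz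
    have h1 := h1W z hz
    have hez : Real.exp (W z) = z / W z := by
      field_simp at hWez ⊢; linarith [hWez]
    have : deriv W z = W z / (z * (1 + W z)) := by
      rw [hez] at huniq
      field_simp at huniq ⊢
      nlinarith [huniq]
    rw [← this]; exact hd
  -- main induction
  intro i hi
  suffices h : ContDiffOn ℝ (⊤ : ℕ∞) (f i) (Set.Ioi (-1)) ∧
      ∀ z : ℝ, 0 < z → iteratedDeriv i W z = ((-1 : ℝ) ^ (i + 1) / z ^ i) * f i (W z) from
    h.2
  induction i with
  | zero => omega
  | succ k ih =>
    rcases hi.eq_or_lt with h1 | h2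
    · -- base case i = 1, k = 0
      have hk0 : k = 0 := by omega
      subst hk0
      constructor
      · have : f 1 = fun z => z / (1 + z) := funext hf1
        rw [this]
        apply ContDiffOn.div contDiffOn_id (contDiffOn_const.add contDiffOn_id)
        intro x hx
        simp only [Set.mem_Ioi] at hx
        intro h; simp only [id_eq] at h; linarith
      · intro z hz
        rw [iteratedDeriv_one, (hW' z hz).deriv, hf1 (W z)]
        have hWz := hWpos z hz
        have h1 := h1W z hz
        field_simp
        ring
    · -- inductive step: k ≥ 1
      have hk1 : 1 ≤ k := by omega
      obtain ⟨m, rfl⟩ : ∃ m, k = m + 1 := ⟨k - 1, by omega⟩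
      obtain ⟨hsm, hfor⟩ := ih hk1
      have hopen : IsOpen (Set.Ioi (-1:ℝ)) := isOpen_Ioi
      have hderivSm : ContDiffOn ℝ (⊤ : ℕ∞) (deriv (f (m+1))) (Set.Ioi (-1)) :=
        hsm.deriv_of_isOpen hopen (by simp)
      have hsm' : ContDiffOn ℝ (⊤ : ℕ∞) (f (m+1+1)) (Set.Ioi (-1)) := by
        have heq2 : f (m+1+1) = fun z => ((m+1:ℕ):ℝ) * f (m+1) z
            - (z / (1 + z)) * deriv (f (m+1)) z := funext (hfrec (m+1) hk1)
        rw [heq2]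
        apply ContDiffOn.sub (contDiffOn_const.mul hsm)
        apply ContDiffOn.mul _ hderivSm
        apply ContDiffOn.div contDiffOn_id (contDiffOn_const.add contDiffOn_id)
        intro x hx
        simp only [Set.mem_Ioi] at hx
        intro h; simp only [id_eq] at h; linarith
      refine ⟨hsm', ?_⟩
      intro z hz
      have hWz := hWpos z hz
      have h1 := h1W z hz
      have hzne : z ≠ 0 := hz.ne'
      have hWmem : W z ∈ Set.Ioi (-1:ℝ) := by simp only [Set.mem_Ioi]; linarith
      have hfd : DifferentiableAt ℝ (f (m+1)) (W z) :=
        (hsm.differentiableOn (by simp)).differentiableAt (hopen.mem_nhds hWmem)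
      have hfk : HasDerivAt (f (m+1)) (deriv (f (m+1)) (W z)) (W z) := hfd.hasDerivAt
      have hWd := hW' z hz
      have hcomp : HasDerivAt (fun z => f (m+1) (W z))
          (deriv (f (m+1)) (W z) * (W z / (z * (1 + W z)))) z := hfk.comp z hWd
      have hinv : HasDerivAt (fun z : ℝ => (z ^ (m+1))⁻¹)
          (-(((m:ℝ)+1) * z ^ m) / (z ^ (m+1))^2) z := by
        have := (hasDerivAt_pow (m+1) z).inv (pow_ne_zero _ hzne)
        simpa [Pi.inv_def] using this
      have hpow : HasDerivAt (fun z : ℝ => (-1:ℝ)^(m+1+1) * (z ^ (m+1))⁻¹)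
          ((-1:ℝ)^(m+1+1) * (-(((m:ℝ)+1) * z ^ m) / (z ^ (m+1))^2)) z := hinv.const_mul _
      have hprod : HasDerivAt (fun z => (-1:ℝ)^(m+1+1) * (z ^ (m+1))⁻¹ * f (m+1) (W z)) _ z :=
        hpow.mul hcomp
      have heq : iteratedDeriv (m+1) W =ᶠ[nhds z]
          (fun z => (-1:ℝ)^(m+1+1) * (z ^ (m+1))⁻¹ * f (m+1) (W z)) := by
        apply Filter.eventuallyEq_of_mem (isOpen_Ioi.mem_nhds hz)
        intro x hx
        rw [hfor x hx, div_eq_mul_inv]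
      rw [iteratedDeriv_succ, heq.deriv_eq, hprod.deriv, hfrec (m+1) hk1 (W z)]
      have hpowne : z ^ (m+1) ≠ 0 := pow_ne_zero _ hzne
      push_cast
      field_simp
      ring
end

section
/- For every B ≥ 0 there exist constants C > 0 and a₀ > 0 such that for all a ≥ a₀ and all b ∈ [0, B] one has |W(a·e^{a+b}) − a − b + b/a| ≤ C/a²; that is, the asymptotic expansion −a − b + W(a e^{a+b}) = −b/a + O(1/a²) as a → ∞ holds uniformly for b in any compact interval of [0,∞). -/
/-!
Since `x ↦ x eˣ` is increasing on `[0, ∞)`, bounds on `W z` follow from comparing `z` with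
`x eˣ`. For `z = a e^{a+b}` and `x = a + b - u` this comparison reduces to `a + b - u` versus
`a eᵘ`. Taking `u = b/a` and using `eᵘ ≥ 1 + u` gives the lower bound `a + b - b/a`; taking
`u = b/a - K/a²` and using `eᵘ ≤ 1 + u + u²` gives the upper bound `a + b - b/a + K/a²`, where
`K = B² + B + 1` absorbs the quadratic error uniformly in `b ∈ [0, B]`.
-/

open Real Set

def IsLambertW (W : ℝ → ℝ) : Prop :=
  ∀ z : ℝ, 0 ≤ z → 0 ≤ W z ∧ W z * exp (W z) = z

lemma strictMonoOn_mul_exp : StrictMonoOn (fun x : ℝ ↦ x * exp x) (Ici 0) := by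
  intro x hx y _ hxy
  exact mul_lt_mul hxy (exp_le_exp.mpr hxy.le) (exp_pos x) (le_of_lt (lt_of_le_of_lt hx hxy))

namespace IsLambertW

variable {W : ℝ → ℝ}

lemma le_apply (hW : IsLambertW W) {x z : ℝ} (hx : 0 ≤ x) (h : x * exp x ≤ z) : x ≤ W z := by
  obtain ⟨hW0, hWz⟩ := hW z (le_trans (by positivity) h)
  rw [← strictMonoOn_mul_exp.le_iff_le hx hW0]
  simpa only [hWz] using h

lemma apply_le (hW : IsLambertW W) {x z : ℝ} (hz : 0 ≤ z) (hx : 0 ≤ x) (h : z ≤ x * exp x) :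
    W z ≤ x := by
  obtain ⟨hW0, hWz⟩ := hW z hz
  rw [← strictMonoOn_mul_exp.le_iff_le hW0 hx]
  simpa only [hWz] using h

end IsLambertW

lemma exp_add_eq_exp_mul_exp_sub (a b u : ℝ) : exp (a + b) = exp u * exp (a + b - u) := by
  rw [← exp_add]; ring_nf

lemma sub_mul_exp_sub_le_iff {a b u : ℝ} :
    (a + b - u) * exp (a + b - u) ≤ a * exp (a + b) ↔ a + b - u ≤ a * exp u := by
  rw [exp_add_eq_exp_mul_exp_sub a b u, ← mul_assoc]
  exact mul_le_mul_iff_left₀ (exp_pos _)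

lemma le_sub_mul_exp_sub_iff {a b u : ℝ} :
    a * exp (a + b) ≤ (a + b - u) * exp (a + b - u) ↔ a * exp u ≤ a + b - u := by
  rw [exp_add_eq_exp_mul_exp_sub a b u, ← mul_assoc]
  exact mul_le_mul_iff_left₀ (exp_pos _)

lemma IsLambertW.add_sub_div_le_apply {W : ℝ → ℝ} (hW : IsLambertW W) {a b : ℝ} (ha : 1 ≤ a)
    (hb : 0 ≤ b) : a + b - b / a ≤ W (a * exp (a + b)) := by
  have ha0 : 0 < a := by linarith
  have hba : b / a ≤ b := div_le_self hb ha
  refine hW.le_apply (by linarith) (sub_mul_exp_sub_le_iff.mpr ?_)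
  calc a + b - b / a ≤ a * (1 + b / a) := by
        rw [mul_add, mul_div_cancel₀ _ ha0.ne']; linarith [div_nonneg hb ha0.le]
    _ ≤ a * exp (b / a) := by gcongr; linarith [add_one_le_exp (b / a)]

lemma IsLambertW.apply_le_add_sub_div_add {W : ℝ → ℝ} (hW : IsLambertW W) {a b B : ℝ}
    (ha : 2 * (B ^ 2 + B + 1) ≤ a) (hb : b ∈ Icc 0 B) :
    W (a * exp (a + b)) ≤ a + b - b / a + (B ^ 2 + B + 1) / a ^ 2 := by
  obtain ⟨hb0, hbB⟩ := hb
  set K := B ^ 2 + B + 1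
  have hK : 1 ≤ K := by nlinarith
  have ha0 : 0 < a := by linarith
  set u := b / a - K / a ^ 2 with hu
  -- `t = a u` is the correction in units of `1/a`; it stays in `[-1/2, B]`.
  set t := a * u with ht
  have ht_eq : t = b - K / a := by rw [ht, hu]; field_simp
  have hKa : K / a ≤ 1 / 2 := by rw [div_le_iff₀ ha0]; linarith
  have hBa : B / a ≤ 1 / 2 := by rw [div_le_iff₀ ha0]; nlinarith
  have hu_abs : |u| ≤ 1 := by
    have : u = t / a := by rw [ht]; field_simp
    rw [this, abs_le]
    constructor
    · rw [le_div_iff₀ ha0, ht_eq]; nlinarith [div_nonneg (by linarith : (0:ℝ) ≤ K) ha0.le]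
    · rw [div_le_iff₀ ha0, ht_eq]; nlinarith [div_nonneg (by linarith : (0:ℝ) ≤ K) ha0.le]
  have htK : t ^ 2 + t ≤ K := by
    have : -1 / 2 ≤ t := by rw [ht_eq]; linarith
    have : t ≤ B := by rw [ht_eq]; linarith [div_nonneg (by linarith : (0:ℝ) ≤ K) ha0.le]
    nlinarith
  have hexp : exp u ≤ 1 + u + u ^ 2 := by
    have := (abs_le.mp (abs_exp_sub_one_sub_id_le hu_abs)).2; linarith
  have hmain : a * (1 + u + u ^ 2) ≤ a + b - u := by
    have h1 : a * (a * (1 + u + u ^ 2) - (a + b - u)) = t ^ 2 + t - K := by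
      rw [ht, hu]; field_simp; ring
    nlinarith
  have hx : 0 ≤ a + b - u := by nlinarith [sq_nonneg u]
  have := hW.apply_le (by positivity) hx
    (le_sub_mul_exp_sub_iff.mpr ((mul_le_mul_of_nonneg_left hexp ha0.le).trans hmain))
  rw [hu] at this
  linarith

/-- Uniform expansion of the Lambert function: for every `B ≥ 0` there are
`C > 0` and `a₀ > 0` such that `|W(a e^{a+b}) - a - b + b/a| ≤ C/a²` for all
`a ≥ a₀` and `b ∈ [0, B]`. -/
theorem stmt_12 (W : ℝ → ℝ)
    (hW : ∀ z : ℝ, 0 ≤ z → 0 ≤ W z ∧ W z * Real.exp (W z) = z) :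
    ∀ B : ℝ, 0 ≤ B → ∃ C : ℝ, 0 < C ∧ ∃ a₀ : ℝ, 0 < a₀ ∧
      ∀ a : ℝ, a₀ ≤ a → ∀ b : ℝ, b ∈ Set.Icc 0 B →
        |W (a * Real.exp (a + b)) - a - b + b / a| ≤ C / a ^ 2 := by
  intro B hB
  have hK : 0 < B ^ 2 + B + 1 := by positivity
  refine ⟨B ^ 2 + B + 1, hK, 2 * (B ^ 2 + B + 1), by positivity, fun a ha b hb ↦ ?_⟩
  have hlow := IsLambertW.add_sub_div_le_apply hW (a := a) (by nlinarith) hb.1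
  have hupp := IsLambertW.apply_le_add_sub_div_add hW ha hb
  rw [abs_le]
  constructor <;> linarith [div_nonneg hK.le (sq_nonneg a)]
end

section
/- Let λ > 0. There exist constants K₀ > 0 and c > 0, depending only on λ, with the following property. Let t₀ ∈ ℝ, let K ∈ (0, K₀], let Q : ℝ → ℝ be continuous with −λ² ≤ Q(t) ≤ −λ² + K·e^{2(t−t₀)} for all t ≤ t₀, and let v be a C² solution of v''(t) + Q(t)·v(t) = 0 on (−∞, t₀] with v(t₀) = e^{−λ t₀} and v'(t₀) = −λ·e^{−λ t₀}. Then for every t ≤ t₀: (1 − cK)·e^{−λ t} ≤ v(t) ≤ (1 + cK)·e^{−λ t} and −λ(1 + cK)·e^{−λ t} ≤ v'(t) ≤ −λ(1 − cK)·e^{−λ t}. -/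
/-!
Normalize by `u = v e^{λt}`, so that `u(t₀) = 1` and `u' = (v' + λv) e^{λt}`. The quantity
`g = (v' + λv) e^{-λt}` vanishes at `t₀` and `g' = -(Q + λ²) v e^{-λt}`, where
`0 ≤ Q + λ² ≤ K e^{2(t - t₀)}`. If `|u| ≤ M` on `[t, t₀]`, integrating `g'` from `t₀` gives
`|u'(r)| ≤ (K M / μ) e^{μ(r - t₀)}` with `μ = min 1 λ`, and integrating once more
`|u - 1| ≤ K M / μ²`. Applied at a maximum point of `|u|` on `[t, t₀]`, this forces `M ≤ 2` as soon
as `K ≤ μ² / 2`, and then `|u - 1|` and `|u'|` are `O(K)`.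
-/
open Set Real

/-- By comparison with `(C / μ) e^{μ(x - b)}`: `f + (C / μ) e^{μ(x - b)}` is monotone, so no
integrability of `f'` is needed. -/
theorem sub_le_of_hasDerivAt_of_neg_exp_le {f f' : ℝ → ℝ} {a b C μ : ℝ} (hμ : 0 < μ)
    (hab : a ≤ b) (hf : ∀ x ∈ Icc a b, HasDerivAt f (f' x) x)
    (hf' : ∀ x ∈ Icc a b, -(C * exp (μ * (x - b))) ≤ f' x) :
    f a - f b ≤ C / μ * (1 - exp (μ * (a - b))) := by
  set H : ℝ → ℝ := fun x ↦ f x + C / μ * exp (μ * (x - b))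
  have hH : ∀ x ∈ Icc a b, HasDerivAt H (f' x + C * exp (μ * (x - b))) x := by
    intro x hx
    have hexp : HasDerivAt (fun y ↦ exp (μ * (y - b))) (exp (μ * (x - b)) * μ) x := by
      simpa using (((hasDerivAt_id x).sub_const b).const_mul μ).exp
    exact ((hf x hx).add (hexp.const_mul (C / μ))).congr_deriv (by field_simp)
  have hmono : MonotoneOn H (Icc a b) :=
    monotoneOn_of_hasDerivWithinAt_nonneg (convex_Icc a b)
      (fun x hx ↦ (hH x hx).continuousAt.continuousWithinAt)
      (fun x hx ↦ (hH x (interior_subset hx)).hasDerivWithinAt)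
      (fun x hx ↦ by linarith [hf' x (interior_subset hx)])
  have := hmono (left_mem_Icc.2 hab) (right_mem_Icc.2 hab) hab
  simp only [H, sub_self, mul_zero, exp_zero] at this
  linarith [mul_sub (C / μ) 1 (exp (μ * (a - b)))]

theorem abs_sub_le_of_hasDerivAt_of_abs_le_exp {f f' : ℝ → ℝ} {a b C μ : ℝ} (hμ : 0 < μ)
    (hab : a ≤ b) (hf : ∀ x ∈ Icc a b, HasDerivAt f (f' x) x)
    (hf' : ∀ x ∈ Icc a b, |f' x| ≤ C * exp (μ * (x - b))) :
    |f a - f b| ≤ C / μ := by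
  have hC : 0 ≤ C := by
    simpa using (abs_nonneg _).trans (hf' b (right_mem_Icc.2 hab))
  have hupper := sub_le_of_hasDerivAt_of_neg_exp_le hμ hab hf
    fun x hx ↦ neg_le_of_abs_le (hf' x hx)
  have hlower := sub_le_of_hasDerivAt_of_neg_exp_le (f := -f) hμ hab (fun x hx ↦ (hf x hx).neg)
    fun x hx ↦ neg_le_neg (le_of_abs_le (hf' x hx))
  have hdiv : C / μ * (1 - exp (μ * (a - b))) ≤ C / μ :=
    mul_le_of_le_one_right (by positivity) (by linarith [exp_pos (μ * (a - b))])
  simp only [Pi.neg_apply] at hlower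
  exact abs_le.2 ⟨by linarith, by linarith⟩

/-- The data `v(t₀) = e^{-λt₀}`, `v'(t₀) = -λ e^{-λt₀}` appear in the normalized form
`mul_exp_end`, `deriv_add_end`. -/
structure IsPerturbedSolution (lam K t₀ : ℝ) (Q v v' : ℝ → ℝ) : Prop where
  le_potential : ∀ x ≤ t₀, -lam ^ 2 ≤ Q x
  potential_le : ∀ x ≤ t₀, Q x ≤ -lam ^ 2 + K * exp (2 * (x - t₀))
  hasDerivAt : ∀ x ≤ t₀, HasDerivAt v (v' x) x
  hasDerivAt_deriv : ∀ x ≤ t₀, HasDerivAt v' (-(Q x * v x)) x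
  mul_exp_end : v t₀ * exp (lam * t₀) = 1
  deriv_add_end : v' t₀ + lam * v t₀ = 0

namespace IsPerturbedSolution

variable {lam μ K t₀ r t : ℝ} {Q v v' : ℝ → ℝ}

theorem perturbation_nonneg (hs : IsPerturbedSolution lam K t₀ Q v v') : 0 ≤ K := by
  simpa using (hs.le_potential t₀ le_rfl).trans (hs.potential_le t₀ le_rfl)

theorem hasDerivAt_mul_exp (hs : IsPerturbedSolution lam K t₀ Q v v') {x : ℝ} (hx : x ≤ t₀) :
    HasDerivAt (fun y ↦ v y * exp (lam * y)) ((v' x + lam * v x) * exp (lam * x)) x := by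
  have hexp : HasDerivAt (fun y ↦ exp (lam * y)) (exp (lam * x) * lam) x := by
    simpa using ((hasDerivAt_id x).const_mul lam).exp
  exact ((hs.hasDerivAt x hx).mul hexp).congr_deriv (by ring)

theorem hasDerivAt_deriv_add_mul_exp (hs : IsPerturbedSolution lam K t₀ Q v v') {x : ℝ}
    (hx : x ≤ t₀) :
    HasDerivAt (fun y ↦ (v' y + lam * v y) * exp (-lam * y))
      (-((Q x + lam ^ 2) * v x * exp (-lam * x))) x := by
  have hexp : HasDerivAt (fun y ↦ exp (-lam * y)) (exp (-lam * x) * -lam) x := by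
    simpa using ((hasDerivAt_id x).const_mul (-lam)).exp
  have hsum : HasDerivAt (fun y ↦ v' y + lam * v y) (-(Q x * v x) + lam * v' x) x :=
    (hs.hasDerivAt_deriv x hx).add ((hs.hasDerivAt x hx).const_mul lam)
  exact (hsum.mul hexp).congr_deriv (by ring)

theorem abs_deriv_add_mul_exp_le (hs : IsPerturbedSolution lam K t₀ Q v v') (hμ : 0 < μ)
    (hμ₁ : μ ≤ 1) (hμlam : μ ≤ lam) (hr : r ≤ t₀)
    {M : ℝ} (hM : ∀ x ∈ Icc r t₀, |v x * exp (lam * x)| ≤ M) :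
    |(v' r + lam * v r) * exp (lam * r)| ≤ K * M / μ * exp (μ * (r - t₀)) := by
  have hK := hs.perturbation_nonneg
  have hM₀ : 0 ≤ M := (abs_nonneg _).trans (hM r (left_mem_Icc.2 hr))
  have hbound : ∀ x ∈ Icc r t₀, |-((Q x + lam ^ 2) * v x * exp (-lam * x))|
      ≤ K * M * exp (-2 * lam * r) * exp (μ * (r - t₀)) * exp (μ * (x - t₀)) := by
    intro x hx
    have hQ₀ : 0 ≤ Q x + lam ^ 2 := by linarith [hs.le_potential x hx.2]
    have hQ₁ : Q x + lam ^ 2 ≤ K * exp (2 * (x - t₀)) := by linarith [hs.potential_le x hx.2]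
    have hv : |v x| * exp (-lam * x) ≤ M * exp (-2 * lam * x) := by
      have h := hM x hx
      rw [abs_mul, abs_of_pos (exp_pos _)] at h
      calc |v x| * exp (-lam * x) = |v x| * exp (lam * x) * exp (-2 * lam * x) := by
            rw [mul_assoc, ← exp_add]; ring_nf
        _ ≤ M * exp (-2 * lam * x) := by gcongr
    -- `2 (x - t₀) - 2 λ x ≤ -2 λ r + μ (r - t₀) + μ (x - t₀)` as `μ ≤ 1` and `μ ≤ 2 λ`
    have hexp : exp (2 * (x - t₀)) * exp (-2 * lam * x)
        ≤ exp (-2 * lam * r) * exp (μ * (r - t₀)) * exp (μ * (x - t₀)) := by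
      simp only [← exp_add, exp_le_exp]
      nlinarith [hx.1, hx.2]
    rw [abs_neg, abs_mul, abs_mul, abs_of_nonneg hQ₀, abs_of_pos (exp_pos _), mul_assoc]
    calc (Q x + lam ^ 2) * (|v x| * exp (-lam * x))
        ≤ K * exp (2 * (x - t₀)) * (M * exp (-2 * lam * x)) := by gcongr
      _ = K * M * (exp (2 * (x - t₀)) * exp (-2 * lam * x)) := by ring
      _ ≤ K * M * (exp (-2 * lam * r) * exp (μ * (r - t₀)) * exp (μ * (x - t₀))) := by gcongr
      _ = _ := by ring
  have h := abs_sub_le_of_hasDerivAt_of_abs_le_exp hμ hr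
    (fun x hx ↦ hs.hasDerivAt_deriv_add_mul_exp hx.2) hbound
  simp only [hs.deriv_add_end, zero_mul, sub_zero] at h
  calc |(v' r + lam * v r) * exp (lam * r)|
      = |(v' r + lam * v r) * exp (-lam * r)| * exp (2 * lam * r) := by
        rw [abs_mul, abs_mul, abs_of_pos (exp_pos _), abs_of_pos (exp_pos _), mul_assoc,
          ← exp_add]
        ring_nf
    _ ≤ K * M * exp (-2 * lam * r) * exp (μ * (r - t₀)) / μ * exp (2 * lam * r) := by gcongr
    _ = K * M / μ * exp (μ * (r - t₀)) * (exp (-2 * lam * r) * exp (2 * lam * r)) := by ring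
    _ = K * M / μ * exp (μ * (r - t₀)) := by
        rw [← exp_add, show -2 * lam * r + 2 * lam * r = 0 by ring, exp_zero, mul_one]

theorem abs_mul_exp_sub_one_le (hs : IsPerturbedSolution lam K t₀ Q v v') (hμ : 0 < μ)
    (hμ₁ : μ ≤ 1) (hμlam : μ ≤ lam) (hr : r ≤ t₀)
    {M : ℝ} (hM : ∀ x ∈ Icc r t₀, |v x * exp (lam * x)| ≤ M) :
    |v r * exp (lam * r) - 1| ≤ K * M / μ ^ 2 := by
  have h := abs_sub_le_of_hasDerivAt_of_abs_le_exp hμ hr (fun x hx ↦ hs.hasDerivAt_mul_exp hx.2)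
    fun x hx ↦ hs.abs_deriv_add_mul_exp_le hμ hμ₁ hμlam hx.2
      fun y hy ↦ hM y ⟨hx.1.trans hy.1, hy.2⟩
  rwa [hs.mul_exp_end, div_div, ← sq] at h

theorem abs_mul_exp_le_two (hs : IsPerturbedSolution lam K t₀ Q v v') (hμ : 0 < μ)
    (hμ₁ : μ ≤ 1) (hμlam : μ ≤ lam) (hK : K ≤ μ ^ 2 / 2) (ht : t ≤ t₀) :
    ∀ x ∈ Icc t t₀, |v x * exp (lam * x)| ≤ 2 := by
  obtain ⟨s, hs_mem, hmax⟩ := isCompact_Icc.exists_isMaxOn (nonempty_Icc.2 ht)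
    fun x hx ↦ (hs.hasDerivAt_mul_exp hx.2).continuousAt.abs.continuousWithinAt
  set M := |v s * exp (lam * s)|
  have hdev : |v s * exp (lam * s) - 1| ≤ K * M / μ ^ 2 :=
    hs.abs_mul_exp_sub_one_le hμ hμ₁ hμlam hs_mem.2 fun x hx ↦ hmax ⟨hs_mem.1.trans hx.1, hx.2⟩
  have hsmall : K * M / μ ^ 2 ≤ M / 2 := by
    rw [div_le_div_iff₀ (by positivity) two_pos]
    nlinarith [abs_nonneg (v s * exp (lam * s))]
  have hM : M ≤ 2 := by
    linarith [abs_sub_abs_le_abs_sub (v s * exp (lam * s)) 1, abs_one (α := ℝ)]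
  exact fun x hx ↦ (hmax hx).trans hM

theorem abs_mul_exp_sub_one_and_deriv_le (hs : IsPerturbedSolution lam K t₀ Q v v') (hμ : 0 < μ)
    (hμ₁ : μ ≤ 1) (hμlam : μ ≤ lam) (hK : K ≤ μ ^ 2 / 2) (ht : t ≤ t₀) :
    |v t * exp (lam * t) - 1| ≤ 2 * K / μ ^ 2 ∧
      |(v' t + lam * v t) * exp (lam * t)| ≤ lam * (2 * K / μ ^ 2) := by
  have hM := hs.abs_mul_exp_le_two hμ hμ₁ hμlam hK ht
  have hK₀ := hs.perturbation_nonneg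
  refine ⟨(hs.abs_mul_exp_sub_one_le hμ hμ₁ hμlam ht hM).trans_eq (by ring), ?_⟩
  calc |(v' t + lam * v t) * exp (lam * t)| ≤ K * 2 / μ * exp (μ * (t - t₀)) :=
        hs.abs_deriv_add_mul_exp_le hμ hμ₁ hμlam ht hM
    _ ≤ K * 2 / μ * 1 := by gcongr; exact exp_le_one_iff.2 (by nlinarith)
    _ = μ * (2 * K / μ ^ 2) := by field_simp
    _ ≤ lam * (2 * K / μ ^ 2) := by gcongr

end IsPerturbedSolution

theorem bounds_of_abs_mul_exp_sub_le {lam x y t ε : ℝ} (hlam : 0 ≤ lam)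
    (hx : |x * exp (lam * t) - 1| ≤ ε) (hy : |(y + lam * x) * exp (lam * t)| ≤ lam * ε) :
    (1 - 2 * ε) * exp (-lam * t) ≤ x ∧ x ≤ (1 + 2 * ε) * exp (-lam * t) ∧
      -lam * (1 + 2 * ε) * exp (-lam * t) ≤ y ∧ y ≤ -lam * (1 - 2 * ε) * exp (-lam * t) := by
  have hε : 0 ≤ ε := (abs_nonneg _).trans hx
  have scale_le : ∀ a b, a ≤ b * exp (lam * t) → a * exp (-lam * t) ≤ b := fun a b h ↦ by
    calc a * exp (-lam * t) ≤ b * exp (lam * t) * exp (-lam * t) := by gcongr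
      _ = b := by rw [mul_assoc, ← exp_add, show lam * t + -lam * t = 0 by ring, exp_zero, mul_one]
  have le_scale : ∀ a b, b * exp (lam * t) ≤ a → b ≤ a * exp (-lam * t) := fun a b h ↦ by
    calc b = b * exp (lam * t) * exp (-lam * t) := by
          rw [mul_assoc, ← exp_add, show lam * t + -lam * t = 0 by ring, exp_zero, mul_one]
      _ ≤ a * exp (-lam * t) := by gcongr
  obtain ⟨hx₁, hx₂⟩ := abs_le.1 hx
  obtain ⟨hy₁, hy₂⟩ := abs_le.1 hy
  have hlx₁ := mul_le_mul_of_nonneg_left hx₁ hlam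
  have hlx₂ := mul_le_mul_of_nonneg_left hx₂ hlam
  exact ⟨scale_le _ _ (by linarith), le_scale _ _ (by linarith), scale_le _ _ (by linarith),
    le_scale _ _ (by linarith)⟩

/-- Estimates for solutions of `v'' + Q v = 0` when the potential `Q` is a
small perturbation of the negative constant `-λ²` on `(-∞, t₀]`: the solution
with data `v(t₀) = e^{-λt₀}`, `v'(t₀) = -λe^{-λt₀}` stays comparable to
`e^{-λt}` together with its derivative. -/
theorem stmt_16 (lam : ℝ) (hlam : 0 < lam) :
    ∃ K₀ : ℝ, 0 < K₀ ∧ ∃ c : ℝ, 0 < c ∧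
      ∀ (t₀ K : ℝ) (Q v : ℝ → ℝ),
        0 < K → K ≤ K₀ →
        Continuous Q →
        (∀ t : ℝ, t ≤ t₀ →
          -lam ^ 2 ≤ Q t ∧ Q t ≤ -lam ^ 2 + K * Real.exp (2 * (t - t₀))) →
        (∀ t : ℝ, t ≤ t₀ → DifferentiableAt ℝ v t) →
        (∀ t : ℝ, t ≤ t₀ → DifferentiableAt ℝ (deriv v) t) →
        (∀ t : ℝ, t ≤ t₀ → deriv (deriv v) t + Q t * v t = 0) →
        v t₀ = Real.exp (-lam * t₀) →
        deriv v t₀ = -lam * Real.exp (-lam * t₀) →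
        ∀ t : ℝ, t ≤ t₀ →
          (1 - c * K) * Real.exp (-lam * t) ≤ v t ∧
          v t ≤ (1 + c * K) * Real.exp (-lam * t) ∧
          -lam * (1 + c * K) * Real.exp (-lam * t) ≤ deriv v t ∧
          deriv v t ≤ -lam * (1 - c * K) * Real.exp (-lam * t) := by
  set μ := min 1 lam
  have hμ : 0 < μ := lt_min one_pos hlam
  refine ⟨μ ^ 2 / 2, by positivity, 4 / μ ^ 2, by positivity, ?_⟩
  intro t₀ K Q v _ hK _ hQ hv hv' hode hv₀ hdv₀ t ht
  have hs : IsPerturbedSolution lam K t₀ Q v (deriv v) :=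
    { le_potential := fun x hx ↦ (hQ x hx).1
      potential_le := fun x hx ↦ (hQ x hx).2
      hasDerivAt := fun x hx ↦ (hv x hx).hasDerivAt
      hasDerivAt_deriv := fun x hx ↦
        (hv' x hx).hasDerivAt.congr_deriv (eq_neg_of_add_eq_zero_left (hode x hx))
      mul_exp_end := by rw [hv₀, ← exp_add, neg_mul, neg_add_cancel, exp_zero]
      deriv_add_end := by rw [hv₀, hdv₀]; ring }
  obtain ⟨hvalue, hderiv⟩ :=
    hs.abs_mul_exp_sub_one_and_deriv_le hμ (min_le_left _ _) (min_le_right _ _) hK ht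
  rw [show 4 / μ ^ 2 * K = 2 * (2 * K / μ ^ 2) by ring]
  exact bounds_of_abs_mul_exp_sub_le hlam.le hvalue hderiv
end
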